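/- Let v = (v₁, v₂, v₃, 1) ∈ ℝ^4 and let P_v(x) = x − x₄ v be the projection of ℝ^4 onto ℝ^3 × {0} in the direction of v. Let g : ℝ^3 × {0} → [−3,3] be a Lipschitz function and let r : ℝ → [0,1] be Lipschitz with Lipschitz constant 1/7. Then the 'rubber band' map R(x) = x + r(x₄) g(P_v(x)) v is a bi-Lipschitz homeomorphism of ℝ^4 onto itself, with bi-Lipschitz constant depending only on |v| and the Lipschitz constant of g. In particular, for every y ∈ ℝ^3 × {0} the function t ↦ t + r(t) g(y) is a strictly increasing bijection of ℝ. -/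

import Mathlib

noncomputable section
open MeasureTheory Set Filter
open scoped NNReal

/-- `ℝ⁴` as Euclidean space. -/
abbrev E4 : Type := EuclideanSpace ℝ (Fin 4)

/-- The projection `P_v(x) = x - x₄ v` of `ℝ⁴` onto `ℝ³ × {0}` in the direction of
`v` (where `v₄ = 1`). -/
def projV (v : E4) (x : E4) : E4 := x - x 3 • v

/-- The `rubber band` map `R(x) = x + r(x₄) g(P_v(x)) v`. -/
def rubberBand (v : E4) (g : E4 → ℝ) (r : ℝ → ℝ) (x : E4) : E4 :=
  x + (r (x 3) * g (projV v x)) • v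

/-!
Writing `x = P_v x + x₄ v`, the map `R` is the shear `R(y + t v) = y + (t + r(t) g(y)) v`
along `v`, which leaves `P_v` unchanged. On each line `y + ℝ v` it acts by
`t ↦ t + r(t) g(y)`, increasing because `t ↦ r(t) g(y)` is `3/7`-Lipschitz and onto because
that perturbation is bounded. In general `R x - R y = (x - y) + Δ v`, where `Δ` is the difference
of the heights `r(x₄) g(P_v x)` and `|Δ| ≤ 3/7 |x₄ - y₄| + Lip(g) |P_v x - P_v y|`. This gives the
upper bound at once. For the lower bound, `|P_v x - P_v y| = |P_v R x - P_v R y|` and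
`|x₄ - y₄| ≤ |(R x)₄ - (R y)₄| + |Δ|`, and since `3/7 < 1` the term `|Δ|` can be absorbed.
-/

theorem strictMono_add_mul_const {r : ℝ → ℝ} {K : ℝ≥0} (hr : LipschitzWith K r) {c : ℝ}
    (hc : K * |c| < 1) : StrictMono fun t => t + r t * c := by
  intro s t hst
  have hrst : |r s - r t| ≤ K * (t - s) := by
    simpa [Real.dist_eq, abs_sub_comm s t, abs_of_pos (sub_pos.2 hst)] using hr.dist_le_mul s t
  have : (r s - r t) * c < t - s :=
    calc (r s - r t) * c ≤ |r s - r t| * |c| := (le_abs_self _).trans (abs_mul _ _).le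
      _ ≤ K * (t - s) * |c| := by gcongr
      _ = K * |c| * (t - s) := by ring
      _ < 1 * (t - s) := by gcongr
      _ = t - s := one_mul _
  show s + r s * c < t + r t * c
  linarith

theorem surjective_add_of_abs_le {f : ℝ → ℝ} (hf : Continuous f) {M : ℝ}
    (hM : ∀ t, |f t| ≤ M) : Function.Surjective fun t => t + f t :=
  (continuous_id.add hf).surjective
    (tendsto_atTop_add_right_of_le _ (-M) tendsto_id fun t => neg_le_of_abs_le (hM t))
    (tendsto_atBot_add_right_of_ge _ M tendsto_id fun t => le_of_abs_le (hM t))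

theorem abs_mul_sub_mul_le {α β : Type*} [PseudoMetricSpace α] [PseudoMetricSpace β]
    {r : α → ℝ} {g : β → ℝ} {Kr Kg : ℝ≥0} {Mr Mg : ℝ} (hr : LipschitzWith Kr r)
    (hg : LipschitzWith Kg g) (hrb : ∀ a, |r a| ≤ Mr) (hgb : ∀ b, |g b| ≤ Mg) (a a' : α)
    (b b' : β) :
    |r a * g b - r a' * g b'| ≤ Kr * Mg * dist a a' + Mr * Kg * dist b b' := by
  have hr' : |r a - r a'| ≤ Kr * dist a a' := by
    simpa [Real.dist_eq] using hr.dist_le_mul a a'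
  have hg' : |g b - g b'| ≤ Kg * dist b b' := by
    simpa [Real.dist_eq] using hg.dist_le_mul b b'
  calc |r a * g b - r a' * g b'| = |(r a - r a') * g b + r a' * (g b - g b')| := by
        congr 1; ring
    _ ≤ |r a - r a'| * |g b| + |r a'| * |g b - g b'| := by
        rw [← abs_mul, ← abs_mul]; exact abs_add_le _ _
    _ ≤ Kr * dist a a' * Mg + Mr * (Kg * dist b b') := by
        have hMr : 0 ≤ Mr := (abs_nonneg _).trans (hrb a')
        gcongr
        · exact hgb b
        · exact hrb a'
    _ = Kr * Mg * dist a a' + Mr * Kg * dist b b' := by ring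

section Shear

variable {E : Type*} [SeminormedAddCommGroup E] [NormedSpace ℝ E]

theorem dist_add_smul_add_smul_le (x y v : E) (a b : ℝ) :
    dist (x + a • v) (y + b • v) ≤ dist x y + |a - b| * ‖v‖ := by
  rw [dist_eq_norm, dist_eq_norm, ← Real.norm_eq_abs, ← norm_smul,
    show x + a • v - (y + b • v) = (x - y) + (a - b) • v by module]
  exact norm_add_le _ _

theorem dist_sub_smul_sub_smul_le (x y v : E) (a b : ℝ) :
    dist (x - a • v) (y - b • v) ≤ dist x y + |a - b| * ‖v‖ := by
  rw [dist_eq_norm, dist_eq_norm, ← Real.norm_eq_abs, ← norm_smul,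
    show x - a • v - (y - b • v) = (x - y) - (a - b) • v by module]
  exact norm_sub_le _ _

end Shear

theorem abs_apply_sub_le_dist (x y : E4) (i : Fin 4) : |x i - y i| ≤ dist x y := by
  simpa [Real.dist_eq] using PiLp.dist_apply_le x y i

section RubberBand

variable {v : E4} {g : E4 → ℝ} {r : ℝ → ℝ}

def bandHeight (v : E4) (g : E4 → ℝ) (r : ℝ → ℝ) (x : E4) : ℝ := r (x 3) * g (projV v x)

theorem rubberBand_eq_add_bandHeight_smul (x : E4) :
    rubberBand v g r x = x + bandHeight v g r x • v :=
  rfl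

theorem projV_apply_three (hv : v 3 = 1) (x : E4) : projV v x 3 = 0 := by
  simp [projV, hv]

theorem projV_add_smul_apply_three (x : E4) : projV v x + x 3 • v = x :=
  sub_add_cancel x _

theorem dist_projV_le (x y : E4) :
    dist (projV v x) (projV v y) ≤ (1 + ‖v‖) * dist x y :=
  calc dist (projV v x) (projV v y) ≤ dist x y + |x 3 - y 3| * ‖v‖ :=
        dist_sub_smul_sub_smul_le x y v _ _
    _ ≤ dist x y + dist x y * ‖v‖ := by gcongr; exact abs_apply_sub_le_dist x y 3
    _ = (1 + ‖v‖) * dist x y := by ring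

theorem rubberBand_apply_three (hv : v 3 = 1) (x : E4) :
    rubberBand v g r x 3 = x 3 + bandHeight v g r x := by
  simp [rubberBand_eq_add_bandHeight_smul, hv]

theorem projV_rubberBand (hv : v 3 = 1) (x : E4) :
    projV v (rubberBand v g r x) = projV v x := by
  rw [projV, rubberBand_apply_three hv, rubberBand_eq_add_bandHeight_smul, projV, add_smul]
  abel

theorem rubberBand_add_smul (hv : v 3 = 1) {y : E4} (hy : y 3 = 0) (t : ℝ) :
    rubberBand v g r (y + t • v) = y + (t + r t * g y) • v := by
  have h3 : (y + t • v) 3 = t := by simp [hy, hv]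
  have hP : projV v (y + t • v) = y := by rw [projV, h3, add_sub_cancel_right]
  rw [rubberBand, h3, hP, add_assoc, ← add_smul]

theorem rubberBand_surjective (hv : v 3 = 1)
    (hfib : ∀ y : E4, Function.Surjective fun t : ℝ => t + r t * g y) :
    Function.Surjective (rubberBand v g r) := by
  intro z
  obtain ⟨t, ht⟩ := hfib (projV v z) (z 3)
  beta_reduce at ht
  refine ⟨projV v z + t • v, ?_⟩
  rw [rubberBand_add_smul hv (projV_apply_three hv z), ht, projV_add_smul_apply_three]

variable {Kg : ℝ≥0}

theorem abs_bandHeight_sub_le (hg : LipschitzWith Kg g) (hgb : ∀ x, |g x| ≤ 3)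
    (hr : LipschitzWith 7⁻¹ r) (hrb : ∀ t, |r t| ≤ 1) (x y : E4) :
    |bandHeight v g r x - bandHeight v g r y| ≤
      3 / 7 * |x 3 - y 3| + Kg * dist (projV v x) (projV v y) :=
  (abs_mul_sub_mul_le hr hg hrb hgb _ _ _ _).trans_eq (by rw [Real.dist_eq]; push_cast; ring)

theorem dist_rubberBand_le (hg : LipschitzWith Kg g) (hgb : ∀ x, |g x| ≤ 3)
    (hr : LipschitzWith 7⁻¹ r) (hrb : ∀ t, |r t| ≤ 1) (x y : E4) :
    dist (rubberBand v g r x) (rubberBand v g r y) ≤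
      (1 + (3 / 7 + Kg * (1 + ‖v‖)) * ‖v‖) * dist x y := by
  have hΔ : |bandHeight v g r x - bandHeight v g r y| ≤ (3 / 7 + Kg * (1 + ‖v‖)) * dist x y :=
    calc _ ≤ 3 / 7 * |x 3 - y 3| + Kg * dist (projV v x) (projV v y) :=
          abs_bandHeight_sub_le hg hgb hr hrb x y
      _ ≤ 3 / 7 * dist x y + Kg * ((1 + ‖v‖) * dist x y) := by
          gcongr
          · exact abs_apply_sub_le_dist x y 3
          · exact dist_projV_le x y
      _ = (3 / 7 + Kg * (1 + ‖v‖)) * dist x y := by ring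
  calc dist (rubberBand v g r x) (rubberBand v g r y) ≤
        dist x y + |bandHeight v g r x - bandHeight v g r y| * ‖v‖ :=
        dist_add_smul_add_smul_le x y v _ _
    _ ≤ dist x y + (3 / 7 + Kg * (1 + ‖v‖)) * dist x y * ‖v‖ := by gcongr
    _ = (1 + (3 / 7 + Kg * (1 + ‖v‖)) * ‖v‖) * dist x y := by ring

theorem dist_le_dist_rubberBand (hv : v 3 = 1) (hg : LipschitzWith Kg g)
    (hgb : ∀ x, |g x| ≤ 3) (hr : LipschitzWith 7⁻¹ r) (hrb : ∀ t, |r t| ≤ 1) (x y : E4) :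
    dist x y ≤ (1 + 7 / 4 * (3 / 7 + Kg * (1 + ‖v‖)) * ‖v‖) *
      dist (rubberBand v g r x) (rubberBand v g r y) := by
  set D := dist (rubberBand v g r x) (rubberBand v g r y)
  set Δ := bandHeight v g r x - bandHeight v g r y
  have hP : dist (projV v x) (projV v y) ≤ (1 + ‖v‖) * D := by
    rw [← projV_rubberBand hv x, ← projV_rubberBand hv y]
    exact dist_projV_le _ _
  have h3 : |x 3 - y 3| ≤ D + |Δ| := by
    have hR3 := abs_apply_sub_le_dist (rubberBand v g r x) (rubberBand v g r y) 3
    rw [rubberBand_apply_three hv, rubberBand_apply_three hv] at hR3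
    calc |x 3 - y 3| = |(x 3 + bandHeight v g r x - (y 3 + bandHeight v g r y)) - Δ| := by
          congr 1; simp only [Δ]; ring
      _ ≤ D + |Δ| := (abs_sub _ _).trans (by gcongr)
  have hΔ : |Δ| ≤ 7 / 4 * (3 / 7 + Kg * (1 + ‖v‖)) * D := by
    have hΔ₀ : |Δ| ≤ 3 / 7 * |x 3 - y 3| + Kg * dist (projV v x) (projV v y) :=
      abs_bandHeight_sub_le hg hgb hr hrb x y
    have := mul_le_mul_of_nonneg_left hP Kg.coe_nonneg
    linarith
  calc dist x y = dist (rubberBand v g r x - bandHeight v g r x • v)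
        (rubberBand v g r y - bandHeight v g r y • v) := by
        rw [rubberBand_eq_add_bandHeight_smul, rubberBand_eq_add_bandHeight_smul,
          add_sub_cancel_right, add_sub_cancel_right]
    _ ≤ D + |Δ| * ‖v‖ := dist_sub_smul_sub_smul_le _ _ v _ _
    _ ≤ D + 7 / 4 * (3 / 7 + Kg * (1 + ‖v‖)) * D * ‖v‖ := by gcongr
    _ = (1 + 7 / 4 * (3 / 7 + Kg * (1 + ‖v‖)) * ‖v‖) * D := by ring

end RubberBand

/-- The rubber band map is a bi-Lipschitz homeomorphism of `ℝ⁴`, with bi-Lipschitz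
constant depending only on `|v|` and the Lipschitz constant of `g`; and along each
projection fibre, `t ↦ t + r(t) g(y)` is a strictly increasing bijection of `ℝ`. -/
theorem rubberBand_biLipschitz :
    ∃ Cf : ℝ → ℝ≥0 → ℝ, (∀ a b, 1 ≤ Cf a b) ∧
      ∀ (v : E4), v 3 = 1 →
      ∀ (g : E4 → ℝ) (Kg : ℝ≥0), LipschitzWith Kg g →
        (∀ x, g x ∈ Set.Icc (-3 : ℝ) 3) →
      ∀ r : ℝ → ℝ, LipschitzWith (7⁻¹ : ℝ≥0) r → (∀ t, r t ∈ Set.Icc (0 : ℝ) 1) →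
        Function.Bijective (rubberBand v g r) ∧
        (∀ x y : E4,
          (Cf ‖v‖ Kg)⁻¹ * dist x y ≤ dist (rubberBand v g r x) (rubberBand v g r y) ∧
          dist (rubberBand v g r x) (rubberBand v g r y) ≤ Cf ‖v‖ Kg * dist x y) ∧
        (∀ y : E4, y 3 = 0 →
          StrictMono (fun t : ℝ => t + r t * g y) ∧
          Function.Bijective (fun t : ℝ => t + r t * g y)) := by
  refine ⟨fun a b => 1 + 2 * (3 / 7 + b * (1 + |a|)) * |a|, fun a b => by
    simp only [le_add_iff_nonneg_right]; positivity, ?_⟩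
  intro v hv g Kg hg hgb r hr hrb
  have hg3 (x : E4) : |g x| ≤ 3 := abs_le.2 (hgb x)
  have hr1 (t : ℝ) : |r t| ≤ 1 := abs_le.2 ⟨by linarith [(hrb t).1], (hrb t).2⟩
  simp only [abs_norm]
  set C := 1 + 2 * (3 / 7 + Kg * (1 + ‖v‖)) * ‖v‖ with hC
  have hL : 0 ≤ (3 / 7 + Kg * (1 + ‖v‖)) * ‖v‖ := by positivity
  have hupper (x y : E4) : dist (rubberBand v g r x) (rubberBand v g r y) ≤ C * dist x y :=
    (dist_rubberBand_le hg hg3 hr hr1 x y).trans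
      (mul_le_mul_of_nonneg_right (by linarith) dist_nonneg)
  have hlower (x y : E4) : dist x y ≤ C * dist (rubberBand v g r x) (rubberBand v g r y) :=
    (dist_le_dist_rubberBand hv hg hg3 hr hr1 x y).trans
      (mul_le_mul_of_nonneg_right (by linarith) dist_nonneg)
  have hfib (y : E4) : StrictMono (fun t : ℝ => t + r t * g y) ∧
      Function.Bijective (fun t : ℝ => t + r t * g y) := by
    have hmono := strictMono_add_mul_const hr (c := g y) (by push_cast; linarith [hg3 y])
    refine ⟨hmono, hmono.injective, surjective_add_of_abs_le (hr.continuous.mul continuous_const)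
      (M := 3) fun t => ?_⟩
    rw [abs_mul]
    exact (mul_le_mul (hr1 t) (hg3 y) (abs_nonneg _) zero_le_one).trans_eq (one_mul 3)
  refine ⟨⟨fun x y hxy => ?_, rubberBand_surjective hv fun y => (hfib y).2.2⟩,
    fun x y => ⟨(inv_mul_le_iff₀ (by positivity)).2 (hlower x y), hupper x y⟩, fun y _ => hfib y⟩
  simpa [hxy] using hlower x y
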